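/- arXiv:1908.00869 — 4 statements merged into one kernel-verified Lean document; each statement's English description precedes it below -/
import Mathlib

section
/- Let u be a subsolution of H = a for some a ∈ ℝ and let K ⊂ ℝ^N be compact. Then there exists a subsolution v of H = a that is constant outside some compact subset of ℝ^N and coincides with u on K. -/
open MeasureTheory Set
open scoped RealInnerProductSpace

noncomputable section

abbrev Euc (N : ℕ) := EuclideanSpace ℝ (Fin N)

/-- `u` is an (a.e.) subsolution of `H = a` in `ℝ^N`. -/
def IsSubsol {N : ℕ} (H : Euc N × Euc N → ℝ) (a : ℝ) (u : Euc N → ℝ) : Prop :=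
  LocallyLipschitz u ∧
    ∀ᵐ x : Euc N ∂volume, DifferentiableAt ℝ u x → H (x, gradient u x) ≤ a

/-- `u` is an (a.e.) subsolution of the discounted equation `λ u + H(x,Du) = 0`. -/
def IsDiscSubsol {N : ℕ} (H : Euc N × Euc N → ℝ) (lam : ℝ) (u : Euc N → ℝ) : Prop :=
  LocallyLipschitz u ∧
    ∀ᵐ x : Euc N ∂volume, DifferentiableAt ℝ u x →
      lam * u x + H (x, gradient u x) ≤ 0

/-- The Lagrangian associated with `H` via the Fenchel transform. -/
def Lag {N : ℕ} (H : Euc N × Euc N → ℝ) : Euc N × Euc N → ℝ :=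
  fun z => sSup (Set.range fun p : Euc N => ⟪p, z.2⟫ - H (z.1, p))

/-- `u` is a subsolution for the generalized Lagrangian `Φ`. -/
def SubsolFor {N : ℕ} (Φ : Euc N × Euc N → ℝ) (u : Euc N → ℝ) : Prop :=
  LocallyLipschitz u ∧
    ∀ᵐ x : Euc N ∂volume, DifferentiableAt ℝ u x →
      ∀ q : Euc N, fderiv ℝ u x q ≤ Φ (x, q)

/-- `u` is a `λ`-discounted subsolution for the generalized Lagrangian `Φ`. -/
def DiscSubsolFor {N : ℕ} (lam : ℝ) (Φ : Euc N × Euc N → ℝ) (u : Euc N → ℝ) : Prop :=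
  LocallyLipschitz u ∧
    ∀ᵐ x : Euc N ∂volume, DifferentiableAt ℝ u x →
      ∀ q : Euc N, lam * u x + fderiv ℝ u x q ≤ Φ (x, q)

/-- A Mather measure for the ergodic problem. -/
def MatherMeasure {N : ℕ} (H : Euc N × Euc N → ℝ) (μ : Measure (Euc N × Euc N)) : Prop :=
  IsProbabilityMeasure μ ∧ Integrable (Lag H) μ ∧ (∫ z, Lag H z ∂μ) = 0 ∧
    ∀ Φ : Euc N × Euc N → ℝ, Continuous Φ → BddBelow (Set.range Φ) →
      (∃ u, SubsolFor Φ u) → (Integrable Φ μ → 0 ≤ ∫ z, Φ z ∂μ)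

/-- A `(λ,z)`-Mather measure (relative to the maximal discounted solution `um`). -/
def DiscMatherMeasure {N : ℕ} (H : Euc N × Euc N → ℝ) (lam : ℝ) (z : Euc N)
    (um : Euc N → ℝ) (μ : Measure (Euc N × Euc N)) : Prop :=
  IsProbabilityMeasure μ ∧ Integrable (Lag H) μ ∧ (∫ w, Lag H w ∂μ) = lam * um z ∧
    ∀ Φ : Euc N × Euc N → ℝ, Continuous Φ → BddBelow (Set.range Φ) →
      ∀ u : Euc N → ℝ, DiscSubsolFor lam Φ u →
        (Integrable Φ μ → lam * u z ≤ ∫ w, Φ w ∂μ)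

/-!
Continuity of `H`, together with the bound on the gradients of the locally Lipschitz `u` near
`x₀`, gives some `p` with `H (x₀, p) ≤ a`, so the constant `m` of (A3) satisfies `m < a`. Hence
`H (x, p) ≤ a` whenever `x` lies outside a large ball and `‖p‖ ≤ ε`, and the truncation
`max (min u ψ) c` of `u` by the cone `ψ y = C + ε R - ε ‖y‖` (above `u` on the ball) and a constant
`c` (below `u` on the ball) is still a subsolution: almost everywhere its gradient is either that
of `u`, or has norm at most `ε` at a point outside the ball. It equals `u` on the ball and `c` far
out.
-/

open Filter Topology
open scoped NNReal

theorem LocallyLipschitz.ae_differentiableAt {E F : Type*} [NormedAddCommGroup E]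
    [NormedSpace ℝ E] [FiniteDimensional ℝ E] [MeasurableSpace E] [BorelSpace E]
    [NormedAddCommGroup F] [NormedSpace ℝ F] [FiniteDimensional ℝ F]
    {μ : Measure E} [μ.IsAddHaarMeasure] {f : E → F} (hf : LocallyLipschitz f) :
    ∀ᵐ x ∂μ, DifferentiableAt ℝ f x := by
  refine measure_null_of_locally_null _ fun x _ => ?_
  obtain ⟨K, t, ht, hK⟩ := hf x
  refine ⟨_, inter_mem_nhdsWithin _ (interior_mem_nhds.mpr ht), ?_⟩
  rw [measure_eq_zero_iff_ae_notMem]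
  filter_upwards [(hK.mono interior_subset).ae_differentiableWithinAt_of_mem] with y hy
  rintro ⟨hnd, hyt⟩
  exact hnd ((hy hyt).differentiableAt (isOpen_interior.mem_nhds hyt))

theorem norm_gradient_eq_norm_fderiv {F : Type*} [NormedAddCommGroup F] [InnerProductSpace ℝ F]
    [CompleteSpace F] (f : F → ℝ) (x : F) : ‖gradient f x‖ = ‖fderiv ℝ f x‖ :=
  (InnerProductSpace.toDual ℝ F).symm.norm_map _

theorem lipschitzWith_const_sub_mul_norm {E : Type*} [SeminormedAddCommGroup E] (A : ℝ)
    (ε : ℝ≥0) : LipschitzWith ε fun y : E => A - ε * ‖y‖ :=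
  LipschitzWith.of_dist_le_mul fun y z => by
    rw [Real.dist_eq, dist_eq_norm, sub_sub_sub_cancel_left, ← mul_sub, abs_mul, NNReal.abs_eq,
      abs_sub_comm]
    gcongr
    exact abs_norm_sub_norm_le y z

section Fderiv

variable {E : Type*} [NormedAddCommGroup E] [NormedSpace ℝ E] {x : E}

theorem fderiv_eq_of_isLocalExtr_sub {f g : E → ℝ} (hf : DifferentiableAt ℝ f x)
    (hg : DifferentiableAt ℝ g x) (h : IsLocalExtr (fun y => f y - g y) x) :
    fderiv ℝ f x = fderiv ℝ g x :=
  sub_eq_zero.mp <| (fderiv_fun_sub hf hg).symm.trans h.fderiv_eq_zero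

theorem fderiv_min_eq_or_norm_le {f g : E → ℝ} {K : ℝ≥0} (hf : ContinuousAt f x)
    (hg : LipschitzWith K g) (hfx : DifferentiableAt ℝ f x)
    (hmin : DifferentiableAt ℝ (fun y => min (f y) (g y)) x) :
    fderiv ℝ (fun y => min (f y) (g y)) x = fderiv ℝ f x ∨
      (g x < f x ∧ ‖fderiv ℝ (fun y => min (f y) (g y)) x‖ ≤ K) := by
  rcases le_or_gt (f x) (g x) with h | h
  · refine .inl (fderiv_eq_of_isLocalExtr_sub hmin hfx (.inr (Eventually.of_forall fun y => ?_)))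
    simp only [min_eq_left h, sub_self, sub_nonpos, min_le_left]
  · have heq : (fun y => min (f y) (g y)) =ᶠ[𝓝 x] g :=
      (hg.continuous.continuousAt.eventually_lt hf h).mono fun y hy => min_eq_right hy.le
    rw [heq.fderiv_eq]
    exact .inr ⟨h, norm_fderiv_le_of_lipschitz ℝ hg⟩

theorem fderiv_max_const_eq_or_eq_zero {w : E → ℝ} {c : ℝ} (hw : ContinuousAt w x)
    (hv : DifferentiableAt ℝ (fun y => max (w y) c) x) :
    (DifferentiableAt ℝ w x ∧ fderiv ℝ (fun y => max (w y) c) x = fderiv ℝ w x) ∨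
      (w x ≤ c ∧ fderiv ℝ (fun y => max (w y) c) x = 0) := by
  rcases lt_or_ge c (w x) with h | h
  · have heq : (fun y => max (w y) c) =ᶠ[𝓝 x] w :=
      (continuousAt_const.eventually_lt hw h).mono fun y hy => max_eq_left hy.le
    exact .inl ⟨heq.differentiableAt_iff.mp hv, heq.fderiv_eq⟩
  · refine .inr ⟨h, IsLocalMin.fderiv_eq_zero (Eventually.of_forall fun y => ?_)⟩
    simp only [max_eq_right h, le_max_right]

end Fderiv

section Subsolution

variable {N : ℕ} {H : Euc N × Euc N → ℝ} {a : ℝ} {u : Euc N → ℝ}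

theorem IsSubsol.exists_le (hH : Continuous H) (hu : IsSubsol H a u) (x₀ : Euc N) :
    ∃ p, H (x₀, p) ≤ a := by
  by_contra! hlt
  obtain ⟨L, t, ht, hLt⟩ := hu.1 x₀
  have hnear : ∀ᶠ x in 𝓝 x₀, ∀ p ∈ Metric.closedBall (0 : Euc N) L, a < H (x, p) :=
    (isCompact_closedBall _ _).eventually_forall_of_forall_eventually fun p _ =>
      continuousAt_const.eventually_lt hH.continuousAt (hlt p)
  have hbad : ∀ᶠ x in 𝓝 x₀, ¬(DifferentiableAt ℝ u x ∧ H (x, gradient u x) ≤ a) := by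
    filter_upwards [hnear, eventually_mem_nhds_iff.mpr ht] with x hx hxt
    rintro ⟨-, hHx⟩
    have hDu : ‖gradient u x‖ ≤ L := by
      rw [norm_gradient_eq_norm_fderiv]
      exact norm_fderiv_le_of_lipschitzOn ℝ hxt hLt
    exact (hx _ (mem_closedBall_zero_iff.mpr hDu)).not_ge hHx
  have hgood : ∀ᵐ x, DifferentiableAt ℝ u x ∧ H (x, gradient u x) ≤ a := by
    filter_upwards [hu.1.ae_differentiableAt, hu.2] with x hd hx using ⟨hd, hx hd⟩
  exact (Measure.measure_pos_of_mem_nhds volume hbad).ne' (ae_iff.mp hgood)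

theorem IsSubsol.max_min {B : Set (Euc N)} {ψ : Euc N → ℝ} {ε : ℝ≥0} {c : ℝ}
    (hu : IsSubsol H a u) (hψ : LipschitzWith ε ψ)
    (hH : ∀ x ∉ B, ∀ p : Euc N, ‖p‖ ≤ ε → H (x, p) ≤ a)
    (huψ : ∀ x ∈ B, u x ≤ ψ x) (hcu : ∀ x ∈ B, c < u x) :
    IsSubsol H a fun y => max (min (u y) (ψ y)) c := by
  refine ⟨(hu.1.min hψ.locallyLipschitz).max_const c, ?_⟩
  filter_upwards [hu.1.ae_differentiableAt, hu.2] with x hux hHu hvx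
  rcases fderiv_max_const_eq_or_eq_zero (hu.1.continuous.min hψ.continuous).continuousAt hvx
    with ⟨hwx, hDv⟩ | ⟨hwc, hDv⟩
  · rcases fderiv_min_eq_or_norm_le hu.1.continuous.continuousAt hψ hux hwx
      with hDw | ⟨hψu, hDw⟩
    · simpa only [gradient, hDv, hDw] using hHu hux
    · refine hH x (fun hx => (huψ x hx).not_gt hψu) _ ?_
      rwa [norm_gradient_eq_norm_fderiv, hDv]
  · refine hH x (fun hx => ?_) _ ?_
    · rw [min_eq_left (huψ x hx)] at hwc
      exact (hcu x hx).not_ge hwc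
    · rw [norm_gradient_eq_norm_fderiv, hDv, norm_zero]
      exact ε.2

end Subsolution

theorem stmt0_general {N : ℕ} (H : Euc N × Euc N → ℝ)
    (hA1 : Continuous H)
    (hA3 : ∃ ε > (0 : ℝ), ∃ m : ℝ,
      (∃ R : ℝ, ∀ x : Euc N, R ≤ ‖x‖ → ∀ p : Euc N, ‖p‖ ≤ ε → H (x, p) ≤ m) ∧
      (∃ x₀ : Euc N, ∀ p : Euc N, m < H (x₀, p)))
    (a : ℝ) (u : Euc N → ℝ) (hu : IsSubsol H a u)
    (K : Set (Euc N)) (hK : IsCompact K) :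
    ∃ v : Euc N → ℝ, IsSubsol H a v ∧ (∀ x ∈ K, v x = u x) ∧
      ∃ C : Set (Euc N), IsCompact C ∧ ∃ c : ℝ, ∀ x ∉ C, v x = c := by
  obtain ⟨ε, hε, m, ⟨R₀, hR₀⟩, x₀, hx₀⟩ := hA3
  lift ε to ℝ≥0 using hε.le
  have hma : m < a := by
    obtain ⟨p, hp⟩ := hu.exists_le hA1 x₀
    exact (hx₀ p).trans_le hp
  obtain ⟨r, hKr⟩ := hK.isBounded.subset_closedBall 0
  set R := max R₀ r
  set B := Metric.closedBall (0 : Euc N) R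
  obtain ⟨C, hC⟩ := (isCompact_closedBall (0 : Euc N) R).exists_bound_of_continuousOn
    hu.1.continuous.continuousOn
  have hbound : ∀ x ∈ B, -C ≤ u x ∧ u x ≤ C ∧ ε * ‖x‖ ≤ ε * R := fun x hx =>
    ⟨(abs_le.mp (hC x hx)).1, (abs_le.mp (hC x hx)).2,
      by gcongr; exact mem_closedBall_zero_iff.mp hx⟩
  have hH : ∀ x ∉ B, ∀ p : Euc N, ‖p‖ ≤ ε → H (x, p) ≤ a := fun x hx p hp =>
    (hR₀ x ((le_max_left _ _).trans (not_le.mp (mt mem_closedBall_zero_iff.mpr hx)).le)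
      p hp).trans hma.le
  refine ⟨_, hu.max_min (lipschitzWith_const_sub_mul_norm (C + ε * R) ε) hH
    (c := -C - 1) (fun x hx => by linarith [hbound x hx]) (fun x hx => by linarith [hbound x hx]),
    fun x hx => ?_, Metric.closedBall 0 (R + (2 * C + 1) / ε), isCompact_closedBall _ _, -C - 1,
    fun x hx => ?_⟩
  · have hxB := hbound x (hKr.trans (Metric.closedBall_subset_closedBall (le_max_right _ _)) hx)
    rw [min_eq_left (by linarith), max_eq_left (by linarith)]
  · have hxn : R + (2 * C + 1) / ε < ‖x‖ := not_le.mp (mt mem_closedBall_zero_iff.mpr hx)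
    have hεx : R * ε + (2 * C + 1) < ‖x‖ * ε := by
      have := mul_lt_mul_of_pos_right hxn hε
      rwa [add_mul, div_mul_cancel₀ _ hε.ne'] at this
    exact max_eq_right ((min_le_right _ _).trans (by linarith))

theorem stmt0 {N : ℕ} (hN : 1 ≤ N) (H : Euc N × Euc N → ℝ)
    (hA1 : Continuous H)
    (hA2conv : ∀ x : Euc N, ConvexOn ℝ Set.univ fun p => H (x, p))
    (hA2coer : ∀ R : ℝ, 0 < R → ∀ C : ℝ, ∃ r : ℝ, ∀ x p : Euc N,
      ‖x‖ ≤ R → r ≤ ‖p‖ → C ≤ H (x, p))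
    (hA3 : ∃ ε > (0 : ℝ), ∃ m : ℝ,
      (∃ R : ℝ, ∀ x : Euc N, R ≤ ‖x‖ → ∀ p : Euc N, ‖p‖ ≤ ε → H (x, p) ≤ m) ∧
      (∃ x₀ : Euc N, ∀ p : Euc N, m < H (x₀, p)))
    (a : ℝ) (u : Euc N → ℝ) (hu : IsSubsol H a u)
    (K : Set (Euc N)) (hK : IsCompact K) :
    ∃ v : Euc N → ℝ, IsSubsol H a v ∧ (∀ x ∈ K, v x = u x) ∧
      ∃ C : Set (Euc N), IsCompact C ∧ ∃ c : ℝ, ∀ x ∉ C, v x = c :=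
  stmt0_general H hA1 hA3 a u hu K hK

end
end

section
/- There exists a Hamiltonian H̃ : ℝ^N × ℝ^N → ℝ satisfying (A1), (A2), (A3) and superlinear in the momentum: H̃(x,p)/|p| → +∞ as |p| → +∞ for every x, such that the subsolutions of H̃ = 0 are exactly the subsolutions of H = 0 (in particular 0 is the critical value of H̃), and for every λ > 0 the pointwise supremum of the subsolutions of λu + H̃(x,Du) = 0 equals u_λ. -/
open MeasureTheory Set
open scoped RealInnerProductSpace

noncomputable section

/-!
Take `H̃(x, p) = max (H(x, p)) (‖p‖² - g(x))`, where `C ≥ 0` bounds `H(·, 0)` from above (it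
exists by (A3) and continuity) and the continuous `g ≥ ε² + |m|` is so large that
`‖p‖² - g(x) ≤ H(x, p)` whenever `H(x, p) ≤ C`; such a `g` exists by coercivity and a partition
of unity. Then `H̃ ≥ H` with equality on the sublevel set `{H ≤ C}`, so subsolutions at levels
`a ≤ C` are the same for both Hamiltonians, and the levels above `C` are reached by constants for
both. A discounted subsolution `v` of `H` is dominated by `max v (-C/λ)`, which is one of `H̃`:
where `v > -C/λ` the inequality `λ v + H(x, Dv) ≤ 0` forces `H(x, Dv) < C`, and elsewhere
`max v (-C/λ)` has a local minimum, where `H̃(x, 0) ≤ C` suffices.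
-/

open Filter Topology Metric

theorem exists_continuous_forall_mem_of_isUpperSet {X : Type*} [TopologicalSpace X]
    [NormalSpace X] [ParacompactSpace X] {t : X → Set ℝ} (ht : ∀ x, IsUpperSet (t x))
    (hloc : ∀ x, ∃ c, ∀ᶠ y in 𝓝 x, c ∈ t y) : ∃ g : X → ℝ, Continuous g ∧ ∀ x, g x ∈ t x := by
  obtain ⟨g, hg⟩ := exists_continuous_forall_mem_convex_of_local_const
    (fun x => (ht x).ordConnected.convex) hloc
  exact ⟨g, g.continuous, hg⟩

section Coercive

variable {E F : Type*} [NormedAddCommGroup E] [ProperSpace E] [NormedAddCommGroup F]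
  [ProperSpace F] {H : E × F → ℝ}

theorem Continuous.exists_forall_le_of_norm_ge {f : E → ℝ} (hf : Continuous f) {R m : ℝ}
    (h : ∀ x, R ≤ ‖x‖ → f x ≤ m) : ∃ C, ∀ x, f x ≤ C := by
  obtain ⟨C, hC⟩ := (isCompact_closedBall (0 : E) R).bddAbove_image hf.continuousOn
  refine ⟨max C m, fun x => ?_⟩
  rcases le_total ‖x‖ R with hx | hx
  · exact (hC (mem_image_of_mem f (by simpa using hx))).trans (le_max_left _ _)
  · exact (h x hx).trans (le_max_right _ _)

theorem exists_continuous_forall_sq_norm_sub_le (hH : Continuous H)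
    (hcoer : ∀ R : ℝ, 0 < R → ∀ C : ℝ, ∃ r : ℝ, ∀ x p, ‖x‖ ≤ R → r ≤ ‖p‖ → C ≤ H (x, p))
    (C K : ℝ) : ∃ g : E → ℝ, Continuous g ∧ (∀ x, K ≤ g x) ∧
      ∀ x p, H (x, p) ≤ C → ‖p‖ ^ 2 - g x ≤ H (x, p) := by
  suffices ∃ g : E → ℝ, Continuous g ∧
      ∀ x, K ≤ g x ∧ ∀ p, H (x, p) ≤ C → ‖p‖ ^ 2 - g x ≤ H (x, p) by
    obtain ⟨g, hg, hgt⟩ := this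
    exact ⟨g, hg, fun x => (hgt x).1, fun x => (hgt x).2⟩
  refine exists_continuous_forall_mem_of_isUpperSet
    (t := fun x => {c | K ≤ c ∧ ∀ p, H (x, p) ≤ C → ‖p‖ ^ 2 - c ≤ H (x, p)})
    (fun x a b hab ha => ⟨ha.1.trans hab, fun p hp => (sub_le_sub_left hab _).trans (ha.2 p hp)⟩)
    fun x₀ => ?_
  obtain ⟨r, hr⟩ := hcoer (‖x₀‖ + 1) (by positivity) (C + 1)
  obtain ⟨b, hb⟩ := ((isCompact_closedBall (0 : E) (‖x₀‖ + 1)).prod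
    (isCompact_closedBall (0 : F) r)).bddBelow_image hH.continuousOn
  refine ⟨max K (r ^ 2 - b), ?_⟩
  filter_upwards [ball_mem_nhds x₀ one_pos] with y hy
  have hyR : ‖y‖ ≤ ‖x₀‖ + 1 := by
    have := norm_le_norm_add_norm_sub' y x₀
    rw [← dist_eq_norm] at this
    linarith [mem_ball.1 hy]
  refine ⟨le_max_left _ _, fun p hp => ?_⟩
  have hpr : ‖p‖ < r := lt_of_not_ge fun h => by linarith [hr y p hyR h]
  have hbp : b ≤ H (y, p) :=
    hb (mem_image_of_mem H ⟨by simpa using hyR, by simpa using hpr.le⟩)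
  have hpr2 : ‖p‖ ^ 2 ≤ r ^ 2 := pow_le_pow_left₀ (norm_nonneg p) hpr.le 2
  linarith [le_max_right K (r ^ 2 - b)]

end Coercive

section MaxNormSqSub

variable {E F : Type*} [NormedAddCommGroup F] (H : E × F → ℝ) (g : E → ℝ)

def maxNormSqSub : E × F → ℝ := fun z => max (H z) (‖z.2‖ ^ 2 - g z.1)

variable {H g}

theorem le_maxNormSqSub (z : E × F) : H z ≤ maxNormSqSub H g z := le_max_left _ _

theorem maxNormSqSub_eq_of_le {C : ℝ}
    (hg : ∀ x p, H (x, p) ≤ C → ‖p‖ ^ 2 - g x ≤ H (x, p)) (z : E × F) (hz : H z ≤ C) :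
    maxNormSqSub H g z = H z :=
  max_eq_left (hg z.1 z.2 hz)

theorem maxNormSqSub_le_of_le {m : ℝ} {x : E} {p : F} (hH : H (x, p) ≤ m)
    (hp : ‖p‖ ^ 2 ≤ m + g x) : maxNormSqSub H g (x, p) ≤ m :=
  max_le hH (by simp only; linarith)

theorem continuous_maxNormSqSub [TopologicalSpace E] (hH : Continuous H) (hg : Continuous g) :
    Continuous (maxNormSqSub H g) :=
  hH.max (((continuous_norm.comp continuous_snd).pow 2).sub (hg.comp continuous_fst))

theorem convexOn_maxNormSqSub [NormedSpace ℝ F] {x : E}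
    (hconv : ConvexOn ℝ univ fun p => H (x, p)) :
    ConvexOn ℝ univ fun p => maxNormSqSub H g (x, p) :=
  hconv.sup <| (convexOn_univ_norm.pow (fun _ _ => norm_nonneg _) 2).sub
    (concaveOn_const (g x) convex_univ)

theorem exists_mul_norm_le_maxNormSqSub (x : E) (C : ℝ) :
    ∃ r : ℝ, ∀ p : F, r ≤ ‖p‖ → C * ‖p‖ ≤ maxNormSqSub H g (x, p) := by
  refine ⟨|C| + |g x| + 1, fun p hp => le_max_of_le_right ?_⟩
  have hC : C * ‖p‖ ≤ |C| * ‖p‖ := mul_le_mul_of_nonneg_right (le_abs_self C) (norm_nonneg p)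
  nlinarith [le_abs_self (g x), abs_nonneg C, abs_nonneg (g x)]

end MaxNormSqSub

section Subsolutions

variable {N : ℕ} {H H' : Euc N × Euc N → ℝ} {a b C lam : ℝ} {u v : Euc N → ℝ}

theorem IsSubsol.mono (hHH' : ∀ z, H z ≤ H' z) (hab : a ≤ b) (hu : IsSubsol H' a u) :
    IsSubsol H b u :=
  ⟨hu.1, hu.2.mono fun _ hx hd => (hHH' _).trans ((hx hd).trans hab)⟩

theorem IsSubsol.of_eq_of_le (hagree : ∀ z, H z ≤ C → H' z = H z) (haC : a ≤ C)
    (hu : IsSubsol H a u) : IsSubsol H' a u :=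
  ⟨hu.1, hu.2.mono fun _ hx hd => by rw [hagree _ ((hx hd).trans haC)]; exact hx hd⟩

theorem isSubsol_const (h : ∀ x, H (x, 0) ≤ a) (c : ℝ) : IsSubsol H a fun _ => c :=
  ⟨LocallyLipschitz.const c, Eventually.of_forall fun x _ => by rw [gradient_fun_const]; exact h x⟩

theorem setOf_isSubsol_eq_of_eq_of_le (hHH' : ∀ z, H z ≤ H' z)
    (hagree : ∀ z, H z ≤ C → H' z = H z) (h₀ : ∀ x, H (x, 0) ≤ C) :
    {a | ∃ u, IsSubsol H' a u} = {a | ∃ u, IsSubsol H a u} := by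
  ext a
  refine ⟨fun ⟨u, hu⟩ => ⟨u, hu.mono hHH' le_rfl⟩, fun ⟨u, hu⟩ => ?_⟩
  rcases le_total a C with haC | hCa
  · exact ⟨u, hu.of_eq_of_le hagree haC⟩
  · exact ⟨_, ((isSubsol_const h₀ 0).of_eq_of_le hagree le_rfl).mono (fun _ => le_rfl) hCa⟩

theorem IsDiscSubsol.mono (hHH' : ∀ z, H z ≤ H' z) (hv : IsDiscSubsol H' lam v) :
    IsDiscSubsol H lam v :=
  ⟨hv.1, hv.2.mono fun _ hx hd => (add_le_add le_rfl (hHH' _)).trans (hx hd)⟩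

theorem IsDiscSubsol.max_const (hagree : ∀ z, H z ≤ C → H' z = H z) (h₀ : ∀ x, H' (x, 0) ≤ C)
    (hlam : 0 < lam) (hv : IsDiscSubsol H lam v) :
    IsDiscSubsol H' lam fun y => max (v y) (-C / lam) := by
  refine ⟨hv.1.max_const _, ?_⟩
  filter_upwards [hv.2] with y hy hdw
  set k := -C / lam
  have hlk : lam * k = -C := mul_div_cancel₀ _ hlam.ne'
  rcases le_or_gt (v y) k with hvk | hkv
  · have hmin : IsLocalMin (fun z => max (v z) k) y :=
      Eventually.of_forall fun z => by simp only [max_eq_right hvk]; exact le_max_right _ _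
    rw [gradient, hmin.fderiv_eq_zero, map_zero, max_eq_right hvk]
    linarith [h₀ y]
  · have hev : (fun z => max (v z) k) =ᶠ[𝓝 y] v :=
      (hv.1.continuous.continuousAt.eventually (lt_mem_nhds hkv)).mono fun z hz =>
        max_eq_left hz.le
    have hdv : DifferentiableAt ℝ v y := hdw.congr_of_eventuallyEq hev.symm
    have hvy := hy hdv
    have hHC : H (y, gradient v y) ≤ C := by nlinarith
    rw [hev.gradient_eq, max_eq_left hkv.le, hagree _ hHC]
    exact hvy

theorem sSup_discSubsol_eq_of_eq_of_le (hHH' : ∀ z, H z ≤ H' z)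
    (hagree : ∀ z, H z ≤ C → H' z = H z) (h₀ : ∀ x, H' (x, 0) ≤ C) (hlam : 0 < lam)
    (x : Euc N) :
    sSup {r | ∃ v, IsDiscSubsol H' lam v ∧ v x = r} =
      sSup {r | ∃ v, IsDiscSubsol H lam v ∧ v x = r} :=
  csSup_eq_csSup_of_forall_exists_le (fun r ⟨v, hv, hr⟩ => ⟨r, ⟨v, hv.mono hHH', hr⟩, le_rfl⟩)
    fun _ ⟨v, hv, hr⟩ =>
      ⟨_, ⟨_, hv.max_const hagree h₀ hlam, rfl⟩, hr ▸ le_max_left (v x) (-C / lam)⟩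

end Subsolutions

theorem stmt5_general {N : ℕ} (H : Euc N × Euc N → ℝ)
    (hA1 : Continuous H)
    (hA2conv : ∀ x : Euc N, ConvexOn ℝ Set.univ fun p => H (x, p))
    (hA2coer : ∀ R : ℝ, 0 < R → ∀ C : ℝ, ∃ r : ℝ, ∀ x p : Euc N,
      ‖x‖ ≤ R → r ≤ ‖p‖ → C ≤ H (x, p))
    (hA3 : ∃ ε > (0 : ℝ), ∃ m : ℝ,
      (∃ R : ℝ, ∀ x : Euc N, R ≤ ‖x‖ → ∀ p : Euc N, ‖p‖ ≤ ε → H (x, p) ≤ m) ∧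
      (∃ x₀ : Euc N, ∀ p : Euc N, m < H (x₀, p)))
    (hcrit : sInf {a : ℝ | ∃ u : Euc N → ℝ, IsSubsol H a u} = 0)
    (um : ℝ → Euc N → ℝ)
    (hum : ∀ lam : ℝ, 0 < lam → ∀ x : Euc N,
      um lam x = sSup {r : ℝ | ∃ v : Euc N → ℝ, IsDiscSubsol H lam v ∧ v x = r})
 :
    ∃ H' : Euc N × Euc N → ℝ,
      Continuous H' ∧
      (∀ x : Euc N, ConvexOn ℝ Set.univ fun p => H' (x, p)) ∧
      (∀ R : ℝ, 0 < R → ∀ C : ℝ, ∃ r : ℝ, ∀ x p : Euc N,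
        ‖x‖ ≤ R → r ≤ ‖p‖ → C ≤ H' (x, p)) ∧
      (∃ ε > (0 : ℝ), ∃ m : ℝ,
        (∃ R : ℝ, ∀ x : Euc N, R ≤ ‖x‖ → ∀ p : Euc N, ‖p‖ ≤ ε → H' (x, p) ≤ m) ∧
        (∃ x₀ : Euc N, ∀ p : Euc N, m < H' (x₀, p))) ∧
      (∀ x : Euc N, ∀ C : ℝ, ∃ r : ℝ, ∀ p : Euc N, r ≤ ‖p‖ → C * ‖p‖ ≤ H' (x, p)) ∧
      (∀ u : Euc N → ℝ, IsSubsol H' 0 u ↔ IsSubsol H 0 u) ∧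
      sInf {a : ℝ | ∃ u : Euc N → ℝ, IsSubsol H' a u} = 0 ∧
      (∀ lam : ℝ, 0 < lam → ∀ x : Euc N,
        sSup {r : ℝ | ∃ v : Euc N → ℝ, IsDiscSubsol H' lam v ∧ v x = r} = um lam x) := by
  obtain ⟨ε, hε, m, ⟨R, hR⟩, x₀, hx₀⟩ := hA3
  obtain ⟨C, hC⟩ := (hA1.comp (continuous_id.prodMk continuous_const)).exists_forall_le_of_norm_ge
    fun x hx => hR x hx 0 (by simpa using hε.le)
  have h₀ : ∀ x, H (x, 0) ≤ max C 0 := fun x => (hC x).trans (le_max_left _ _)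
  obtain ⟨g, hg, hgK, hgH⟩ := exists_continuous_forall_sq_norm_sub_le hA1 hA2coer (max C 0)
    (ε ^ 2 + |m|)
  have hagree : ∀ z, H z ≤ max C 0 → maxNormSqSub H g z = H z := maxNormSqSub_eq_of_le hgH
  have h₀' : ∀ x, maxNormSqSub H g (x, 0) ≤ max C 0 := fun x => (hagree _ (h₀ x)).trans_le (h₀ x)
  refine ⟨maxNormSqSub H g, continuous_maxNormSqSub hA1 hg,
    fun x => convexOn_maxNormSqSub (hA2conv x), fun R' hR' C' => ?_,
    ⟨ε, hε, m, ⟨R, fun x hx p hp => ?_⟩, x₀, fun p => ?_⟩, exists_mul_norm_le_maxNormSqSub,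
    fun u => ?_, setOf_isSubsol_eq_of_eq_of_le le_maxNormSqSub hagree h₀ ▸ hcrit,
    fun lam hlam x => ?_⟩
  · obtain ⟨r, hr⟩ := hA2coer R' hR' C'
    exact ⟨r, fun x p hx hp => (hr x p hx hp).trans (le_maxNormSqSub _)⟩
  · have : ‖p‖ ^ 2 ≤ ε ^ 2 := pow_le_pow_left₀ (norm_nonneg p) hp 2
    exact maxNormSqSub_le_of_le (hR x hx p hp) (by linarith [hgK x, neg_abs_le m])
  · exact (hx₀ p).trans_le (le_maxNormSqSub _)
  · exact ⟨IsSubsol.mono le_maxNormSqSub le_rfl, IsSubsol.of_eq_of_le hagree (le_max_right _ _)⟩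
  · rw [hum lam hlam x]
    exact sSup_discSubsol_eq_of_eq_of_le le_maxNormSqSub hagree h₀' hlam x

theorem stmt5 {N : ℕ} (hN : 1 ≤ N) (H : Euc N × Euc N → ℝ)
    (hA1 : Continuous H)
    (hA2conv : ∀ x : Euc N, ConvexOn ℝ Set.univ fun p => H (x, p))
    (hA2coer : ∀ R : ℝ, 0 < R → ∀ C : ℝ, ∃ r : ℝ, ∀ x p : Euc N,
      ‖x‖ ≤ R → r ≤ ‖p‖ → C ≤ H (x, p))
    (hA3 : ∃ ε > (0 : ℝ), ∃ m : ℝ,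
      (∃ R : ℝ, ∀ x : Euc N, R ≤ ‖x‖ → ∀ p : Euc N, ‖p‖ ≤ ε → H (x, p) ≤ m) ∧
      (∃ x₀ : Euc N, ∀ p : Euc N, m < H (x₀, p)))
    (hcrit : sInf {a : ℝ | ∃ u : Euc N → ℝ, IsSubsol H a u} = 0)
    (um : ℝ → Euc N → ℝ)
    (hum : ∀ lam : ℝ, 0 < lam → ∀ x : Euc N,
      um lam x = sSup {r : ℝ | ∃ v : Euc N → ℝ, IsDiscSubsol H lam v ∧ v x = r})
 :
    ∃ H' : Euc N × Euc N → ℝ,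
      Continuous H' ∧
      (∀ x : Euc N, ConvexOn ℝ Set.univ fun p => H' (x, p)) ∧
      (∀ R : ℝ, 0 < R → ∀ C : ℝ, ∃ r : ℝ, ∀ x p : Euc N,
        ‖x‖ ≤ R → r ≤ ‖p‖ → C ≤ H' (x, p)) ∧
      (∃ ε > (0 : ℝ), ∃ m : ℝ,
        (∃ R : ℝ, ∀ x : Euc N, R ≤ ‖x‖ → ∀ p : Euc N, ‖p‖ ≤ ε → H' (x, p) ≤ m) ∧
        (∃ x₀ : Euc N, ∀ p : Euc N, m < H' (x₀, p))) ∧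
      (∀ x : Euc N, ∀ C : ℝ, ∃ r : ℝ, ∀ p : Euc N, r ≤ ‖p‖ → C * ‖p‖ ≤ H' (x, p)) ∧
      (∀ u : Euc N → ℝ, IsSubsol H' 0 u ↔ IsSubsol H 0 u) ∧
      sInf {a : ℝ | ∃ u : Euc N → ℝ, IsSubsol H' a u} = 0 ∧
      (∀ lam : ℝ, 0 < lam → ∀ x : Euc N,
        sSup {r : ℝ | ∃ v : Euc N → ℝ, IsDiscSubsol H' lam v ∧ v x = r} = um lam x) :=
  stmt5_general H hA1 hA2conv hA2coer hA3 hcrit um hum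

end
end

section
/- Given an open ball B ⊂ ℝ^N, there exists R > 1 such that: for every ε > 0, every locally Lipschitz u : B → ℝ satisfying Du(x)·q ≤ L(x,q) − ε for a.e. x ∈ B and every q with |q| ≤ R in fact satisfies Du(x)·q ≤ L(x,q) − ε for a.e. x ∈ B and every q ∈ ℝ^N (i.e., u is a strict subsolution of H = 0 in B: H(x,Du(x)) ≤ −ε for a.e. x ∈ B). -/
open MeasureTheory Set
open scoped RealInnerProductSpace

noncomputable section

/-!
On the compact set `K = closedBall x₀ ρ`, convexity and pointwise superlinearity of `H` give a
uniform bound `2‖p‖ - D ≤ H (x, p)`, hence `L (x, q) ≤ D` for `‖q‖ = 2`, while the boundedness of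
`H` on `K × closedBall 0 a` gives `a‖q‖ - M ≤ L (x, q)` for a slope `a > D / 2`. If
`Du · q ≤ L (x, q) - ε` for `‖q‖ ≤ R` with `R ≥ max 2 M`, homogeneity of `Du` gives
`Du · q ≤ ‖q‖ (D - ε) / 2` for larger `q`, and the faster growth of `L` beats this by at least `ε`.
-/

open Topology

section ConvexGrowth

variable {E : Type*} [NormedAddCommGroup E] [NormedSpace ℝ E]

-- Difference quotients of a convex function increase along each ray.
theorem ConvexOn.mul_norm_le_sub_of_sphere {f : E → ℝ} (hf : ConvexOn ℝ univ f) {C r : ℝ}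
    (hr : 0 < r) (hsphere : ∀ p : E, ‖p‖ = r → C * r ≤ f p - f 0) {p : E} (hp : r ≤ ‖p‖) :
    C * ‖p‖ ≤ f p - f 0 := by
  have hp0 : 0 < ‖p‖ := hr.trans_le hp
  set t := r / ‖p‖
  have ht0 : 0 < t := div_pos hr hp0
  have ht1 : t ≤ 1 := (div_le_one hp0).2 hp
  have hnorm : ‖t • p‖ = r := by
    rw [norm_smul, Real.norm_of_nonneg ht0.le, div_mul_cancel₀ _ hp0.ne']
  have hconv : f (t • p) ≤ t * f p + (1 - t) * f 0 := by
    simpa using hf.2 (mem_univ p) (mem_univ 0) ht0.le (sub_nonneg.2 ht1) (by ring)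
  have hscaled : t * (C * ‖p‖) ≤ t * (f p - f 0) := by
    have : t * (C * ‖p‖) = C * r := by
      simp only [t]; field_simp
    linarith [hsphere _ hnorm]
  exact le_of_mul_le_mul_left hscaled ht0

variable {X : Type*} [TopologicalSpace X] [ProperSpace E]

theorem exists_eventually_mul_norm_sub_le {H : X × E → ℝ} (hH : Continuous H)
    (hconv : ∀ x, ConvexOn ℝ univ fun p => H (x, p)) {x₁ : X}
    (hsl : ∀ C : ℝ, ∃ r : ℝ, ∀ p : E, r ≤ ‖p‖ → C * ‖p‖ ≤ H (x₁, p)) (C : ℝ) :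
    ∃ D : ℝ, ∀ᶠ x in 𝓝 x₁, ∀ p : E, C * ‖p‖ - D ≤ H (x, p) := by
  obtain ⟨r₀, hr₀⟩ := hsl (C + 1)
  set r := max r₀ (|H (x₁, 0)| + 1)
  have hr : 0 < r := lt_max_of_lt_right (by positivity)
  have hdiff : Continuous fun z : X × E => H z - H (z.1, 0) := by fun_prop
  have hsphere : ∀ᶠ x in 𝓝 x₁, ∀ p ∈ Metric.sphere (0 : E) r, C * r < H (x, p) - H (x, 0) := by
    refine (isCompact_sphere 0 r).eventually_forall_of_forall_eventually fun p hp => ?_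
    have hpr : ‖p‖ = r := by simpa using hp
    have hgrowth := hr₀ p (hpr ▸ le_max_left _ _)
    have hr' : H (x₁, 0) < r := (le_abs_self _).trans_lt (lt_max_of_lt_right (lt_add_one _))
    exact continuousAt_const.eventually_lt hdiff.continuousAt (by rw [hpr] at hgrowth; linarith)
  obtain ⟨m, hm⟩ := (isCompact_closedBall (0 : E) r).bddBelow_image
    (hH.comp (Continuous.prodMk_right x₁)).continuousOn
  have hball : ∀ᶠ x in 𝓝 x₁, ∀ p ∈ Metric.closedBall (0 : E) r, m - 1 < H (x, p) := by
    refine (isCompact_closedBall 0 r).eventually_forall_of_forall_eventually fun p hp => ?_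
    have : m ≤ H (x₁, p) := hm ⟨p, hp, rfl⟩
    exact continuousAt_const.eventually_lt hH.continuousAt (by linarith)
  refine ⟨|C| * r - m + 1, (hsphere.and hball).mono fun x ⟨hxs, hxb⟩ p => ?_⟩
  have hH0 := hxb 0 (Metric.mem_closedBall_self hr.le)
  rcases le_or_gt ‖p‖ r with hp | hp
  · have : C * ‖p‖ ≤ |C| * r :=
      (mul_le_mul_of_nonneg_right (le_abs_self C) (norm_nonneg p)).trans
        (mul_le_mul_of_nonneg_left hp (abs_nonneg C))
    linarith [hxb p (by simpa using hp)]
  · have := (hconv x).mul_norm_le_sub_of_sphere hr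
      (fun q hq => (hxs q (by simpa using hq)).le) hp.le
    linarith [mul_nonneg (abs_nonneg C) hr.le]

theorem IsCompact.exists_forall_mul_norm_sub_le {H : X × E → ℝ} (hH : Continuous H)
    (hconv : ∀ x, ConvexOn ℝ univ fun p => H (x, p))
    (hsl : ∀ x C, ∃ r : ℝ, ∀ p : E, r ≤ ‖p‖ → C * ‖p‖ ≤ H (x, p)) {K : Set X}
    (hK : IsCompact K) (C : ℝ) :
    ∃ D : ℝ, ∀ x ∈ K, ∀ p : E, C * ‖p‖ - D ≤ H (x, p) := by
  refine hK.induction_on (p := fun s => ∃ D : ℝ, ∀ x ∈ s, ∀ p : E, C * ‖p‖ - D ≤ H (x, p))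
    ⟨0, fun _ h => h.elim⟩ (fun s t hst ⟨D, hD⟩ => ⟨D, fun x hx => hD x (hst hx)⟩)
    (fun s t ⟨D₁, hD₁⟩ ⟨D₂, hD₂⟩ => ⟨max D₁ D₂, fun x hx p => ?_⟩) fun x _ => ?_
  · rcases hx with hx | hx
    · linarith [hD₁ x hx p, le_max_left D₁ D₂]
    · linarith [hD₂ x hx p, le_max_right D₁ D₂]
  · obtain ⟨D, hD⟩ := exists_eventually_mul_norm_sub_le hH hconv (hsl x) C
    exact ⟨_, mem_nhdsWithin_of_mem_nhds hD, D, fun _ h => h⟩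

end ConvexGrowth

theorem inner_sub_le_of_mul_norm_sub_le {F : Type*} [NormedAddCommGroup F] [InnerProductSpace ℝ F]
    {f : F → ℝ} {a D : ℝ} (hf : ∀ p, a * ‖p‖ - D ≤ f p) {q : F} (hq : ‖q‖ ≤ a) (p : F) :
    ⟪p, q⟫ - f p ≤ D := by
  have : ⟪p, q⟫ ≤ a * ‖p‖ := by
    calc ⟪p, q⟫ ≤ ‖p‖ * ‖q‖ := real_inner_le_norm p q
    _ ≤ ‖p‖ * a := mul_le_mul_of_nonneg_left hq (norm_nonneg p)
    _ = a * ‖p‖ := mul_comm _ _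
  linarith [hf p]

section Lagrangian

variable {N : ℕ} {H : Euc N × Euc N → ℝ} {x q : Euc N}

theorem Lag_le_of_mul_norm_sub_le {a D : ℝ} (hH : ∀ p, a * ‖p‖ - D ≤ H (x, p)) (hq : ‖q‖ ≤ a) :
    Lag H (x, q) ≤ D :=
  csSup_le (range_nonempty _) (forall_mem_range.2 (inner_sub_le_of_mul_norm_sub_le hH hq))

theorem inner_sub_le_Lag {D : ℝ} (hH : ∀ p, ‖q‖ * ‖p‖ - D ≤ H (x, p)) (p : Euc N) :
    ⟪p, q⟫ - H (x, p) ≤ Lag H (x, q) :=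
  le_csSup ⟨D, forall_mem_range.2 (inner_sub_le_of_mul_norm_sub_le hH le_rfl)⟩ (mem_range_self p)

theorem mul_norm_sub_le_Lag {D a M : ℝ} (hH : ∀ p, ‖q‖ * ‖p‖ - D ≤ H (x, p)) (ha : 0 ≤ a)
    (hM : ∀ p, ‖p‖ ≤ a → H (x, p) ≤ M) : a * ‖q‖ - M ≤ Lag H (x, q) := by
  set p := (a / ‖q‖) • q
  have hinner : ⟪p, q⟫ = a * ‖q‖ := by
    rcases eq_or_ne q 0 with rfl | hq
    · simp
    · rw [real_inner_smul_left, real_inner_self_eq_norm_mul_norm]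
      field_simp
  have hp : ‖p‖ ≤ a := by
    rw [norm_smul, Real.norm_of_nonneg (by positivity)]
    rcases eq_or_ne q 0 with rfl | hq
    · simpa using ha
    · rw [div_mul_cancel₀ _ (norm_ne_zero_iff.2 hq)]
  linarith [inner_sub_le_Lag hH p, hM p hp]

end Lagrangian

theorem LinearMap.le_sub_of_forall_norm_le {E : Type*} [NormedAddCommGroup E] [NormedSpace ℝ E]
    (l : E →ₗ[ℝ] ℝ) {L : E → ℝ} {r a D M R ε : ℝ} (hr : 0 < r) (hε : 0 < ε)
    (hup : ∀ q, ‖q‖ = r → L q ≤ D) (ha : D / r + 1 ≤ a) (hlow : ∀ q, a * ‖q‖ - M ≤ L q)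
    (hrR : r ≤ R) (hMR : M ≤ R) (hl : ∀ q, ‖q‖ ≤ R → l q ≤ L q - ε) (q : E) :
    l q ≤ L q - ε := by
  rcases le_or_gt ‖q‖ R with hq | hq
  · exact hl q hq
  have hq0 : 0 < ‖q‖ := hr.trans_le hrR |>.trans hq
  set q' := (r / ‖q‖) • q
  have hq' : ‖q'‖ = r := by
    rw [norm_smul, Real.norm_of_nonneg (by positivity), div_mul_cancel₀ _ hq0.ne']
  have hlq' : l q' ≤ D - ε := by linarith [hl q' (hq'.trans_le hrR), hup q' hq']
  have hlq : l q = ‖q‖ / r * l q' := by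
    rw [map_smul, smul_eq_mul, ← mul_assoc, div_mul_div_cancel₀ hr.ne', div_self hq0.ne', one_mul]
  have hslope : D / r * ‖q‖ + ‖q‖ ≤ a * ‖q‖ := by nlinarith
  have hεq : ε ≤ ε * (‖q‖ / r) := le_mul_of_one_le_right hε.le ((one_le_div hr).2 (by linarith))
  calc l q ≤ ‖q‖ / r * (D - ε) := by rw [hlq]; gcongr
    _ = D / r * ‖q‖ - ε * (‖q‖ / r) := by ring
    _ ≤ a * ‖q‖ - M - ε := by linarith
    _ ≤ L q - ε := by linarith [hlow q]

theorem stmt7_general {N : ℕ} (H : Euc N × Euc N → ℝ)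
    (hA1 : Continuous H)
    (hA2conv : ∀ x : Euc N, ConvexOn ℝ Set.univ fun p => H (x, p))
    (hsl : ∀ x : Euc N, ∀ C : ℝ, ∃ r : ℝ, ∀ p : Euc N, r ≤ ‖p‖ → C * ‖p‖ ≤ H (x, p))
    (x₀ : Euc N) (ρ : ℝ) :
    ∃ R : ℝ, 1 < R ∧ ∀ ε : ℝ, 0 < ε → ∀ u : Euc N → ℝ,
      LocallyLipschitzOn (Metric.ball x₀ ρ) u →
      (∀ᵐ x : Euc N ∂volume, x ∈ Metric.ball x₀ ρ → DifferentiableAt ℝ u x →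
        ∀ q : Euc N, ‖q‖ ≤ R → fderiv ℝ u x q ≤ Lag H (x, q) - ε) →
      (∀ᵐ x : Euc N ∂volume, x ∈ Metric.ball x₀ ρ → DifferentiableAt ℝ u x →
        ∀ q : Euc N, fderiv ℝ u x q ≤ Lag H (x, q) - ε) := by
  have hK := isCompact_closedBall x₀ ρ
  obtain ⟨D, hD⟩ := hK.exists_forall_mul_norm_sub_le hA1 hA2conv hsl 2
  set a := |D| / 2 + 1 with ha
  obtain ⟨M, hM⟩ := (hK.prod (isCompact_closedBall (0 : Euc N) a)).bddAbove_image
    hA1.continuousOn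
  refine ⟨max 2 M + 1, by linarith [le_max_left 2 M], fun ε hε u _ hu => ?_⟩
  filter_upwards [hu] with x hR hx hdiff
  have hxK := Metric.ball_subset_closedBall hx
  have hlow : ∀ q, a * ‖q‖ - M ≤ Lag H (x, q) := fun q => by
    obtain ⟨Dq, hDq⟩ := hK.exists_forall_mul_norm_sub_le hA1 hA2conv hsl ‖q‖
    exact mul_norm_sub_le_Lag (hDq x hxK) (by positivity)
      fun p hp => hM ⟨(x, p), ⟨hxK, by simpa using hp⟩, rfl⟩
  exact (fderiv ℝ u x).toLinearMap.le_sub_of_forall_norm_le two_pos hε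
    (fun q hq => Lag_le_of_mul_norm_sub_le (hD x hxK) hq.le)
    (by linarith [le_abs_self D]) hlow (by linarith [le_max_left 2 M])
    (by linarith [le_max_right 2 M]) (hR hx hdiff)

theorem stmt7 {N : ℕ} (hN : 1 ≤ N) (H : Euc N × Euc N → ℝ)
    (hA1 : Continuous H)
    (hA2conv : ∀ x : Euc N, ConvexOn ℝ Set.univ fun p => H (x, p))
    (hA2coer : ∀ R : ℝ, 0 < R → ∀ C : ℝ, ∃ r : ℝ, ∀ x p : Euc N,
      ‖x‖ ≤ R → r ≤ ‖p‖ → C ≤ H (x, p))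
    (hA3 : ∃ ε > (0 : ℝ), ∃ m : ℝ,
      (∃ R : ℝ, ∀ x : Euc N, R ≤ ‖x‖ → ∀ p : Euc N, ‖p‖ ≤ ε → H (x, p) ≤ m) ∧
      (∃ x₀ : Euc N, ∀ p : Euc N, m < H (x₀, p)))
    (hcrit : sInf {a : ℝ | ∃ u : Euc N → ℝ, IsSubsol H a u} = 0)
    (hsl : ∀ x : Euc N, ∀ C : ℝ, ∃ r : ℝ, ∀ p : Euc N, r ≤ ‖p‖ → C * ‖p‖ ≤ H (x, p))
    (x₀ : Euc N) (ρ : ℝ) (hρ : 0 < ρ) :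
    ∃ R : ℝ, 1 < R ∧ ∀ ε : ℝ, 0 < ε → ∀ u : Euc N → ℝ,
      LocallyLipschitzOn (Metric.ball x₀ ρ) u →
      (∀ᵐ x : Euc N ∂volume, x ∈ Metric.ball x₀ ρ → DifferentiableAt ℝ u x →
        ∀ q : Euc N, ‖q‖ ≤ R → fderiv ℝ u x q ≤ Lag H (x, q) - ε) →
      (∀ᵐ x : Euc N ∂volume, x ∈ Metric.ball x₀ ρ → DifferentiableAt ℝ u x →
        ∀ q : Euc N, fderiv ℝ u x q ≤ Lag H (x, q) - ε) :=
  stmt7_general H hA1 hA2conv hsl x₀ ρ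

end
end

section
/- Let z ∈ ℝ^N, λ > 0, let μ be a (λ,z)-Mather measure, and let ψ : ℝ^N → ℝ be a C¹ function that is constant outside a compact set. Then ∫ (λ ψ(x) + Dψ(x)·q) dμ(x,q) = λ ψ(z). -/
open MeasureTheory Set
open scoped RealInnerProductSpace

noncomputable section

/-!
Since `ψ` is itself a `λ`-discounted subsolution for `Φ(x, q) = λ ψ(x) + Dψ(x)·q`, the defining
inequality of a `(λ, z)`-Mather measure gives `λ ψ(z) ≤ ∫ Φ dμ`, and the same argument for `-ψ`
gives the reverse inequality. The test function `Φ` is not bounded below, so the inequality is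
first applied to the truncations `max Φ (-n)` and then passed to the limit by dominated
convergence. This requires `Φ` to be `μ`-integrable: by the Fenchel inequality, on the compact set
where `Dψ ≠ 0` the term `Dψ(x)·q` is dominated by `L(x, q)` plus a constant.
-/

open Filter Topology

section InnerProductSpace

variable {E : Type*} [NormedAddCommGroup E] [InnerProductSpace ℝ E]

theorem bddAbove_range_inner_sub_of_superlinear [ProperSpace E] {f : E → ℝ} (hf : Continuous f)
    (hsl : ∀ C : ℝ, ∃ r : ℝ, ∀ p : E, r ≤ ‖p‖ → C * ‖p‖ ≤ f p) (q : E) :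
    BddAbove (range fun p => ⟪p, q⟫ - f p) := by
  obtain ⟨r, hr⟩ := hsl ‖q‖
  obtain ⟨M, hM⟩ := (isCompact_closedBall (0 : E) r).bddAbove_image
    (f := fun p => ⟪p, q⟫ - f p) (by fun_prop)
  refine ⟨max M 0, forall_mem_range.2 fun p => ?_⟩
  rcases le_or_gt ‖p‖ r with hp | hp
  · exact (hM ⟨p, mem_closedBall_zero_iff.2 hp, rfl⟩).trans (le_max_left _ _)
  · have hpq := real_inner_le_norm p q
    have hfp := hr p hp.le
    exact le_max_of_le_right (by nlinarith)

theorem exists_norm_le_inner_eq_mul_norm {a : ℝ} (ha : 0 ≤ a) (q : E) :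
    ∃ p : E, ‖p‖ ≤ a ∧ ⟪p, q⟫ = a * ‖q‖ := by
  rcases eq_or_ne q 0 with rfl | hq
  · exact ⟨0, by simpa using ha, by simp⟩
  · have hq0 : 0 < ‖q‖ := norm_pos_iff.2 hq
    refine ⟨(a / ‖q‖) • q, ?_, ?_⟩
    · rw [norm_smul, Real.norm_of_nonneg (by positivity), div_mul_cancel₀ _ hq0.ne']
    · rw [real_inner_smul_left, real_inner_self_eq_norm_sq]
      field_simp

end InnerProductSpace

section Lagrangian

variable {N : ℕ} {H : Euc N × Euc N → ℝ}

theorem inner_sub_le_lag (hA1 : Continuous H)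
    (hsl : ∀ x : Euc N, ∀ C : ℝ, ∃ r : ℝ, ∀ p : Euc N, r ≤ ‖p‖ → C * ‖p‖ ≤ H (x, p))
    (x q p : Euc N) : ⟪p, q⟫ - H (x, p) ≤ Lag H (x, q) :=
  le_csSup (bddAbove_range_inner_sub_of_superlinear (by fun_prop) (hsl x) q) (mem_range_self p)

theorem mul_norm_sub_le_lag (hA1 : Continuous H)
    (hsl : ∀ x : Euc N, ∀ C : ℝ, ∃ r : ℝ, ∀ p : Euc N, r ≤ ‖p‖ → C * ‖p‖ ≤ H (x, p))
    {x : Euc N} {a K : ℝ} (ha : 0 ≤ a) (hK : ∀ p : Euc N, ‖p‖ ≤ a → H (x, p) ≤ K) (q : Euc N) :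
    a * ‖q‖ - K ≤ Lag H (x, q) := by
  obtain ⟨p, hp, hpq⟩ := exists_norm_le_inner_eq_mul_norm ha q
  have := inner_sub_le_lag hA1 hsl x q p
  linarith [hK p hp]

theorem exists_abs_apply_le_abs_lag_add (hA1 : Continuous H)
    (hsl : ∀ x : Euc N, ∀ C : ℝ, ∃ r : ℝ, ∀ p : Euc N, r ≤ ‖p‖ → C * ‖p‖ ≤ H (x, p))
    {L : Euc N → Euc N →L[ℝ] ℝ} (hLc : Continuous L) (hLs : HasCompactSupport L) :
    ∃ K : ℝ, ∀ w : Euc N × Euc N, |L w.1 w.2| ≤ |Lag H w| + K := by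
  obtain ⟨a, ha⟩ := hLc.bounded_above_of_compact_support hLs
  have ha0 : 0 ≤ a := (norm_nonneg _).trans (ha 0)
  obtain ⟨K, hK⟩ := (hLs.isCompact.prod (isCompact_closedBall (0 : Euc N) a)).bddAbove_image
    hA1.continuousOn
  refine ⟨max K 0, fun ⟨x, q⟩ => ?_⟩
  by_cases hx : x ∈ tsupport L
  · have hHK : ∀ p : Euc N, ‖p‖ ≤ a → H (x, p) ≤ K := fun p hp =>
      hK ⟨(x, p), ⟨hx, mem_closedBall_zero_iff.2 hp⟩, rfl⟩
    calc |L x q| ≤ ‖L x‖ * ‖q‖ := (L x).le_opNorm q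
      _ ≤ a * ‖q‖ := by gcongr; exact ha x
      _ ≤ Lag H (x, q) + K := by linarith [mul_norm_sub_le_lag hA1 hsl ha0 hHK q]
      _ ≤ |Lag H (x, q)| + max K 0 := add_le_add (le_abs_self _) (le_max_left _ _)
  · rw [image_eq_zero_of_notMem_tsupport hx, zero_apply, abs_zero]
    positivity

theorem integrable_mul_add_fderiv_apply (hA1 : Continuous H)
    (hsl : ∀ x : Euc N, ∀ C : ℝ, ∃ r : ℝ, ∀ p : Euc N, r ≤ ‖p‖ → C * ‖p‖ ≤ H (x, p))
    {μ : Measure (Euc N × Euc N)} [IsFiniteMeasure μ] (hL : Integrable (Lag H) μ) (lam : ℝ)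
    {ψ : Euc N → ℝ} (hψ : ContDiff ℝ 1 ψ) {c : ℝ} (hψc : HasCompactSupport fun x => ψ x - c) :
    Integrable (fun w : Euc N × Euc N => lam * ψ w.1 + fderiv ℝ ψ w.1 w.2) μ := by
  have hDψ : Continuous (fderiv ℝ ψ) := hψ.continuous_fderiv one_ne_zero
  obtain ⟨B, hB⟩ := (show Continuous fun x => ψ x - c by fun_prop).bounded_above_of_compact_support
    hψc
  have hDψs : HasCompactSupport (fderiv ℝ ψ) := by
    have h : fderiv ℝ (fun x => ψ x - c) = fderiv ℝ ψ := funext fun _ => fderiv_sub_const c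
    exact h ▸ hψc.fderiv ℝ
  obtain ⟨K, hK⟩ := exists_abs_apply_le_abs_lag_add hA1 hsl hDψ hDψs
  refine (hL.abs.add (integrable_const (|lam| * (B + |c|) + K))).mono'
    (by fun_prop) (Eventually.of_forall fun w => ?_)
  have hψB : |ψ w.1| ≤ B + |c| := by
    have := hB w.1
    rw [Real.norm_eq_abs] at this
    linarith [abs_sub_abs_le_abs_sub (ψ w.1) c]
  calc ‖lam * ψ w.1 + fderiv ℝ ψ w.1 w.2‖
      ≤ |lam| * |ψ w.1| + |fderiv ℝ ψ w.1 w.2| := by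
        rw [Real.norm_eq_abs, ← abs_mul]; exact abs_add_le _ _
    _ ≤ |lam| * (B + |c|) + (|Lag H w| + K) := by gcongr; exact hK w
    _ = _ := by simp only [Pi.add_apply]; ring

end Lagrangian

theorem tendsto_integral_max_neg_natCast {X : Type*} [MeasurableSpace X] {μ : Measure X}
    {g : X → ℝ} (hg : Integrable g μ) :
    Tendsto (fun n : ℕ => ∫ x, max (g x) (-n) ∂μ) atTop (𝓝 (∫ x, g x ∂μ)) := by
  refine tendsto_integral_of_dominated_convergence (fun x => |g x|)
    (fun n => hg.aestronglyMeasurable.sup aestronglyMeasurable_const) hg.abs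
    (fun n => Eventually.of_forall fun x => ?_) (Eventually.of_forall fun x => ?_)
  · rw [Real.norm_eq_abs]
    exact abs_le.2 ⟨(neg_abs_le _).trans (le_max_left _ _),
      max_le (le_abs_self _) ((neg_nonpos.2 n.cast_nonneg).trans (abs_nonneg _))⟩
  · refine tendsto_const_nhds.congr' ?_
    filter_upwards [tendsto_natCast_atTop_atTop.eventually_ge_atTop (-g x)] with n hn
    exact (max_eq_left (by linarith)).symm

section Discounted

variable {N : ℕ} {lam : ℝ}

theorem DiscSubsolFor.mono {Φ Φ' : Euc N × Euc N → ℝ} {u : Euc N → ℝ}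
    (hu : DiscSubsolFor lam Φ u) (h : ∀ w, Φ w ≤ Φ' w) : DiscSubsolFor lam Φ' u :=
  ⟨hu.1, hu.2.mono fun _ hx hd q => (hx hd q).trans (h _)⟩

theorem ContDiff.discSubsolFor_mul_add_fderiv {ψ : Euc N → ℝ} (hψ : ContDiff ℝ 1 ψ) :
    DiscSubsolFor lam (fun w => lam * ψ w.1 + fderiv ℝ ψ w.1 w.2) ψ :=
  ⟨hψ.locallyLipschitz, Eventually.of_forall fun _ _ _ => le_rfl⟩

theorem DiscMatherMeasure.mul_le_integral {H : Euc N × Euc N → ℝ} {z : Euc N}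
    {um : Euc N → ℝ} {μ : Measure (Euc N × Euc N)} (hμ : DiscMatherMeasure H lam z um μ)
    {Φ : Euc N × Euc N → ℝ} (hΦc : Continuous Φ) (hΦi : Integrable Φ μ) {u : Euc N → ℝ}
    (hu : DiscSubsolFor lam Φ u) : lam * u z ≤ ∫ w, Φ w ∂μ := by
  obtain ⟨hprob, -, -, hM⟩ := hμ
  refine ge_of_tendsto (tendsto_integral_max_neg_natCast hΦi) (Eventually.of_forall fun n => ?_)
  exact hM _ (hΦc.max continuous_const)
    ⟨-n, forall_mem_range.2 fun _ => le_max_right _ _⟩ u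
    (hu.mono fun _ => le_max_left _ _) (hΦi.sup (integrable_const _))

end Discounted

theorem stmt11_general {N : ℕ} (H : Euc N × Euc N → ℝ)
    (hA1 : Continuous H)
    (hsl : ∀ x : Euc N, ∀ C : ℝ, ∃ r : ℝ, ∀ p : Euc N, r ≤ ‖p‖ → C * ‖p‖ ≤ H (x, p))
    (um : ℝ → Euc N → ℝ)
    (z : Euc N) (lam : ℝ)
    (μ : Measure (Euc N × Euc N)) (hμ : DiscMatherMeasure H lam z (um lam) μ)
    (ψ : Euc N → ℝ) (hψ : ContDiff ℝ 1 ψ)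
    (hconst : ∃ C : Set (Euc N), IsCompact C ∧ ∃ c : ℝ, ∀ x ∉ C, ψ x = c) :
    Integrable (fun w : Euc N × Euc N => lam * ψ w.1 + fderiv ℝ ψ w.1 w.2) μ ∧
    (∫ w : Euc N × Euc N, (lam * ψ w.1 + fderiv ℝ ψ w.1 w.2) ∂μ) = lam * ψ z := by
  obtain ⟨C, hC, c, hψc⟩ := hconst
  have hsupp : HasCompactSupport fun x => ψ x - c :=
    HasCompactSupport.intro hC fun x hx => sub_eq_zero.2 (hψc x hx)
  have hprob := hμ.1
  have hint := integrable_mul_add_fderiv_apply hA1 hsl hμ.2.1 lam hψ hsupp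
  have hcont : Continuous fun w : Euc N × Euc N => lam * ψ w.1 + fderiv ℝ ψ w.1 w.2 := by
    have := hψ.continuous_fderiv one_ne_zero
    fun_prop
  have hle := hμ.mul_le_integral hcont hint hψ.discSubsolFor_mul_add_fderiv
  have hneg : (fun w : Euc N × Euc N => lam * (-ψ) w.1 + fderiv ℝ (-ψ) w.1 w.2) =
      fun w => -(lam * ψ w.1 + fderiv ℝ ψ w.1 w.2) := by
    ext w
    simp only [Pi.neg_apply, fderiv_neg, neg_apply]
    ring
  have hge := hμ.mul_le_integral hcont.neg hint.neg (hneg ▸ hψ.neg.discSubsolFor_mul_add_fderiv)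
  simp only [Pi.neg_apply, mul_neg, integral_neg] at hge
  exact ⟨hint, by linarith⟩

theorem stmt11 {N : ℕ} (hN : 1 ≤ N) (H : Euc N × Euc N → ℝ)
    (hA1 : Continuous H)
    (hA2conv : ∀ x : Euc N, ConvexOn ℝ Set.univ fun p => H (x, p))
    (hA2coer : ∀ R : ℝ, 0 < R → ∀ C : ℝ, ∃ r : ℝ, ∀ x p : Euc N,
      ‖x‖ ≤ R → r ≤ ‖p‖ → C ≤ H (x, p))
    (hA3 : ∃ ε > (0 : ℝ), ∃ m : ℝ,
      (∃ R : ℝ, ∀ x : Euc N, R ≤ ‖x‖ → ∀ p : Euc N, ‖p‖ ≤ ε → H (x, p) ≤ m) ∧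
      (∃ x₀ : Euc N, ∀ p : Euc N, m < H (x₀, p)))
    (hcrit : sInf {a : ℝ | ∃ u : Euc N → ℝ, IsSubsol H a u} = 0)
    (hsl : ∀ x : Euc N, ∀ C : ℝ, ∃ r : ℝ, ∀ p : Euc N, r ≤ ‖p‖ → C * ‖p‖ ≤ H (x, p))
    (um : ℝ → Euc N → ℝ)
    (hum : ∀ lam : ℝ, 0 < lam → ∀ x : Euc N,
      um lam x = sSup {r : ℝ | ∃ v : Euc N → ℝ, IsDiscSubsol H lam v ∧ v x = r})
    (z : Euc N) (lam : ℝ) (hlam : 0 < lam)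
    (μ : Measure (Euc N × Euc N)) (hμ : DiscMatherMeasure H lam z (um lam) μ)
    (ψ : Euc N → ℝ) (hψ : ContDiff ℝ 1 ψ)
    (hconst : ∃ C : Set (Euc N), IsCompact C ∧ ∃ c : ℝ, ∀ x ∉ C, ψ x = c) :
    Integrable (fun w : Euc N × Euc N => lam * ψ w.1 + fderiv ℝ ψ w.1 w.2) μ ∧
    (∫ w : Euc N × Euc N, (lam * ψ w.1 + fderiv ℝ ψ w.1 w.2) ∂μ) = lam * ψ z :=
  stmt11_general H hA1 hsl um z lam μ hμ ψ hψ hconst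

end
end
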